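/- arXiv:1508.02348 — 6 statements merged into one kernel-verified Lean document; each statement's English description precedes it below -/
import Mathlib

section
/- For every integer n ≥ 5, 2·∑_{k=0}^{n−1} |cos(2πk/n) + cos(4πk/n)| = 4·(D_{⌊n/6⌋}(2π/n) + D_{⌊n/6⌋}(4π/n)), where D_m(x) = sin((m+1/2)x)/sin(x/2) is the Dirichlet kernel and ⌊·⌋ is the floor function. -/
/-!
Write `f k = cos (2πk/n) + cos (4πk/n) = 2 cos (3πk/n) cos (πk/n)` and `m = ⌊n/6⌋`.
Then `f k ≥ 0` for `k ≤ m` and `k ≥ n - m`, `f k ≤ 0` in between, and `∑_{k<n} f k = 0`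
(both cosines sum to zero over a full period). Hence `∑ |f k|` is twice the sum of `f` over
the nonnegative range, which by the symmetry `f (n - k) = f k` is
`2 (2 ∑_{k ≤ m} f k - f 0)`, i.e. `2 (D_m(2π/n) + D_m(4π/n))`: the same telescoping identity
`2 sin (x/2) ∑_{k<N} cos (k x) = sin ((N - 1/2) x) + sin (x/2)` gives both the closed form
of `D_m` and the vanishing of the full-period sums.
-/

open Real Finset

/-- The Dirichlet kernel `D_m(x) = sin((m + 1/2)x) / sin(x/2)`. -/
noncomputable def DKern (m : ℕ) (x : ℝ) : ℝ :=
  Real.sin ((m + 1 / 2) * x) / Real.sin (x / 2)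

theorem two_mul_sin_half_mul_sum_range_cos (x : ℝ) (N : ℕ) :
    2 * sin (x / 2) * ∑ k ∈ range N, cos (k * x) = sin ((N - 1 / 2) * x) + sin (x / 2) := by
  induction N with
  | zero =>
    rw [sum_range_zero, mul_zero, Nat.cast_zero, show (0 - 1 / 2) * x = -(x / 2) by ring, sin_neg,
      neg_add_cancel]
  | succ N ih =>
    have h := two_mul_sin_mul_cos (x / 2) (N * x)
    rw [sum_range_succ, mul_add, ih]
    push_cast
    rw [show ((N : ℝ) + 1 - 1 / 2) * x = x / 2 + N * x by ring,
      show ((N : ℝ) - 1 / 2) * x = -(x / 2 - N * x) by ring, sin_neg]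
    linarith

theorem DKern_eq_two_mul_sum_range_cos_sub_one (m : ℕ) {x : ℝ} (hx : sin (x / 2) ≠ 0) :
    DKern m x = 2 * ∑ k ∈ range (m + 1), cos (k * x) - 1 := by
  have h := two_mul_sin_half_mul_sum_range_cos x (m + 1)
  rw [DKern, div_eq_iff hx]
  push_cast at h
  rw [show ((m : ℝ) + 1 - 1 / 2) = m + 1 / 2 by ring] at h
  linear_combination -h

theorem sum_range_cos_mul_eq_zero {x : ℝ} (hx : sin (x / 2) ≠ 0) {n : ℕ} (j : ℤ)
    (hnx : n * x = j * (2 * π)) : ∑ k ∈ range n, cos (k * x) = 0 := by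
  have h := two_mul_sin_half_mul_sum_range_cos x n
  rw [show ((n : ℝ) - 1 / 2) * x = j * (2 * π) - x / 2 by linear_combination hnx,
    sin_int_mul_two_pi_sub, neg_add_cancel] at h
  simpa [hx] using h

theorem cos_two_mul_add_cos_four_mul (θ : ℝ) :
    cos (2 * θ) + cos (4 * θ) = 2 * cos (3 * θ) * cos θ := by
  rw [cos_add_cos, show (2 * θ + 4 * θ) / 2 = 3 * θ by ring,
    show (2 * θ - 4 * θ) / 2 = -θ by ring, cos_neg]

theorem cos_two_mul_add_cos_four_mul_pi_sub (θ : ℝ) :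
    cos (2 * (π - θ)) + cos (4 * (π - θ)) = cos (2 * θ) + cos (4 * θ) := by
  rw [show 2 * (π - θ) = ((1 : ℤ) : ℝ) * (2 * π) - 2 * θ by push_cast; ring,
    show 4 * (π - θ) = ((2 : ℤ) : ℝ) * (2 * π) - 4 * θ by push_cast; ring,
    cos_int_mul_two_pi_sub, cos_int_mul_two_pi_sub]

theorem cos_two_mul_add_cos_four_mul_nonneg {θ : ℝ} (h₀ : 0 ≤ θ) (h₁ : θ ≤ π / 6) :
    0 ≤ cos (2 * θ) + cos (4 * θ) := by
  rw [cos_two_mul_add_cos_four_mul]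
  have hπ := pi_pos
  have h3 : 0 ≤ cos (3 * θ) := cos_nonneg_of_mem_Icc ⟨by linarith, by linarith⟩
  have h1 : 0 ≤ cos θ := cos_nonneg_of_mem_Icc ⟨by linarith, by linarith⟩
  positivity

theorem cos_two_mul_add_cos_four_mul_nonpos {θ : ℝ} (h₀ : π / 6 ≤ θ) (h₁ : θ ≤ 5 * π / 6) :
    cos (2 * θ) + cos (4 * θ) ≤ 0 := by
  rw [cos_two_mul_add_cos_four_mul]
  rcases le_total θ (π / 2) with h | h
  · have h3 : cos (3 * θ) ≤ 0 := cos_nonpos_of_pi_div_two_le_of_le (by linarith) (by linarith)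
    have h1 : 0 ≤ cos θ := cos_nonneg_of_mem_Icc ⟨by linarith, h⟩
    nlinarith
  · have h3 : 0 ≤ cos (3 * θ) := by
      rw [← cos_sub_two_pi]
      exact cos_nonneg_of_mem_Icc ⟨by linarith, by linarith⟩
    have h1 : cos θ ≤ 0 := cos_nonpos_of_pi_div_two_le_of_le h (by linarith [pi_pos])
    nlinarith

theorem Finset.sum_Ico_sub_eq_sum_range_succ_sub {M : Type*} [AddCommGroup M] (g : ℕ → M)
    {m n : ℕ} (hmn : m ≤ n) (hsymm : ∀ k ≤ n, g (n - k) = g k) :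
    ∑ k ∈ Ico (n - m) n, g k = ∑ k ∈ range (m + 1), g k - g 0 := by
  have h := sum_Ico_reflect g 1 (show m + 1 ≤ n + 1 by omega)
  rw [show n + 1 - (m + 1) = n - m by omega, Nat.add_sub_cancel] at h
  rw [← h, sum_range_succ', add_sub_cancel_right, sum_Ico_eq_sum_range, Nat.add_sub_cancel]
  exact sum_congr rfl fun k hk => by rw [hsymm _ (by simp at hk; omega), add_comm]

theorem Finset.sum_range_abs_eq_of_sign_pattern {f : ℕ → ℝ} {m n : ℕ} (hmn : 2 * m < n)
    (hsum : ∑ k ∈ range n, f k = 0) (hsymm : ∀ k ≤ n, f (n - k) = f k)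
    (hnonneg : ∀ k ≤ m, 0 ≤ f k) (hnonpos : ∀ k, m < k → k < n - m → f k ≤ 0) :
    ∑ k ∈ range n, |f k| = 2 * (2 * ∑ k ∈ range (m + 1), f k - f 0) := by
  have hsplit (g : ℕ → ℝ) : ∑ k ∈ range n, g k = ∑ k ∈ range (m + 1), g k +
      ∑ k ∈ Ico (m + 1) (n - m), g k + ∑ k ∈ Ico (n - m) n, g k := by
    rw [range_eq_Ico, range_eq_Ico,
      sum_Ico_consecutive g (Nat.zero_le _) (by omega : m + 1 ≤ n - m),
      sum_Ico_consecutive g (Nat.zero_le _) (Nat.sub_le n m)]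
  have hhead : ∑ k ∈ range (m + 1), |f k| = ∑ k ∈ range (m + 1), f k :=
    sum_congr rfl fun k hk => abs_of_nonneg (hnonneg k (by simp at hk; omega))
  have hmid : ∑ k ∈ Ico (m + 1) (n - m), |f k| = -∑ k ∈ Ico (m + 1) (n - m), f k := by
    rw [← sum_neg_distrib]
    refine sum_congr rfl fun k hk => abs_of_nonpos ?_
    rw [mem_Ico] at hk
    exact hnonpos k (by omega) (by omega)
  have hmn' : m ≤ n := by omega
  have htail := sum_Ico_sub_eq_sum_range_succ_sub f hmn' hsymm
  have htail_abs := sum_Ico_sub_eq_sum_range_succ_sub (fun k => |f k|) hmn' fun k hk => by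
    rw [hsymm k hk]
  rw [hsplit] at hsum ⊢
  rw [hhead, hmid, htail_abs, hhead, abs_of_nonneg (hnonneg 0 (Nat.zero_le _))]
  linarith

theorem sin_pi_mul_div_ne_zero {j n : ℕ} (hj : 0 < j) (hjn : j < n) : sin (π * j / n) ≠ 0 := by
  have hj' : (0 : ℝ) < j := by exact_mod_cast hj
  have hjn' : (j : ℝ) < n := by exact_mod_cast hjn
  have hn' : (0 : ℝ) < n := hj'.trans hjn'
  refine (sin_pos_of_pos_of_lt_pi (by positivity) ?_).ne'
  rw [div_lt_iff₀ hn']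
  nlinarith [pi_pos]

noncomputable def cosPairSum (n k : ℕ) : ℝ := cos (2 * π * k / n) + cos (4 * π * k / n)

theorem cosPairSum_eq_cos_angle (n k : ℕ) :
    cosPairSum n k = cos (2 * (π * k / n)) + cos (4 * (π * k / n)) := by
  rw [cosPairSum]; ring_nf

theorem cosPairSum_eq_cos_mul (n k : ℕ) :
    cosPairSum n k = cos (k * (2 * π / n)) + cos (k * (4 * π / n)) := by
  rw [cosPairSum]; ring_nf

theorem sin_two_pi_div_half_ne_zero {n : ℕ} (hn : 2 < n) : sin (2 * π / n / 2) ≠ 0 := by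
  convert sin_pi_mul_div_ne_zero (j := 1) one_pos (by omega : 1 < n) using 2
  push_cast; ring

theorem sin_four_pi_div_half_ne_zero {n : ℕ} (hn : 4 < n) : sin (4 * π / n / 2) ≠ 0 := by
  convert sin_pi_mul_div_ne_zero (j := 2) two_pos (by omega : 2 < n) using 2
  push_cast; ring

theorem sum_range_cosPairSum {n : ℕ} (hn : 4 < n) : ∑ k ∈ range n, cosPairSum n k = 0 := by
  have hn₀ : (n : ℝ) ≠ 0 := by exact_mod_cast (show n ≠ 0 by omega)
  simp only [cosPairSum_eq_cos_mul, sum_add_distrib]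
  rw [sum_range_cos_mul_eq_zero (sin_two_pi_div_half_ne_zero (by omega)) 1 (by field_simp; simp),
    sum_range_cos_mul_eq_zero (sin_four_pi_div_half_ne_zero hn) 2 (by field_simp; push_cast; ring),
    add_zero]

theorem cosPairSum_sub {n k : ℕ} (hk : k ≤ n) : cosPairSum n (n - k) = cosPairSum n k := by
  rcases Nat.eq_zero_or_pos n with rfl | hn
  · rw [Nat.le_zero.mp hk]
  have hn₀ : (n : ℝ) ≠ 0 := by positivity
  rw [cosPairSum_eq_cos_angle, cosPairSum_eq_cos_angle, Nat.cast_sub hk,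
    show π * (n - k : ℝ) / n = π - π * k / n by field_simp, cos_two_mul_add_cos_four_mul_pi_sub]

theorem cosPairSum_nonneg {n k : ℕ} (hk : 6 * k ≤ n) : 0 ≤ cosPairSum n k := by
  rcases Nat.eq_zero_or_pos n with rfl | hn
  · rw [show k = 0 by omega, cosPairSum]; norm_num
  have hn₀ : (0 : ℝ) < n := by exact_mod_cast hn
  have h6 : (6 * k : ℝ) ≤ n := by exact_mod_cast hk
  rw [cosPairSum_eq_cos_angle]
  refine cos_two_mul_add_cos_four_mul_nonneg (by positivity) ?_
  rw [div_le_div_iff₀ hn₀ (by norm_num)]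
  nlinarith [pi_pos]

theorem cosPairSum_nonpos {n k : ℕ} (hk : k ≤ n) (h₁ : n < 6 * k) (h₂ : n ≤ 6 * (n - k)) :
    cosPairSum n k ≤ 0 := by
  have hn₀ : (0 : ℝ) < n := by exact_mod_cast (show 0 < n by omega)
  have h₁' : (n : ℝ) ≤ 6 * k := by exact_mod_cast h₁.le
  have h₂' : (n : ℝ) ≤ 6 * (n - k) := by rw [← Nat.cast_sub hk]; exact_mod_cast h₂
  rw [cosPairSum_eq_cos_angle]
  refine cos_two_mul_add_cos_four_mul_nonpos ?_ ?_
  · rw [div_le_div_iff₀ (by norm_num) hn₀]; nlinarith [pi_pos]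
  · rw [div_le_div_iff₀ hn₀ (by norm_num)]; nlinarith [pi_pos]

/-- For every integer `n ≥ 5`,
`2 ∑_{k=0}^{n-1} |cos(2πk/n) + cos(4πk/n)| = 4 (D_{⌊n/6⌋}(2π/n) + D_{⌊n/6⌋}(4π/n))`. -/
theorem sum_abs_cos_eq_dirichlet (n : ℕ) (hn : 5 ≤ n) :
    2 * ∑ k ∈ Finset.range n, |Real.cos (2 * π * k / n) + Real.cos (4 * π * k / n)| =
      4 * (DKern (n / 6) (2 * π / n) + DKern (n / 6) (4 * π / n)) := by
  change 2 * ∑ k ∈ range n, |cosPairSum n k| = _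
  rw [sum_range_abs_eq_of_sign_pattern (m := n / 6) (by omega) (sum_range_cosPairSum hn)
      (fun _ => cosPairSum_sub) (fun _ _ => cosPairSum_nonneg (by omega))
      (fun _ _ _ => cosPairSum_nonpos (by omega) (by omega) (by omega)),
    DKern_eq_two_mul_sum_range_cos_sub_one _ (sin_two_pi_div_half_ne_zero (by omega)),
    DKern_eq_two_mul_sum_range_cos_sub_one _ (sin_four_pi_div_half_ne_zero hn)]
  simp only [cosPairSum_eq_cos_mul, sum_add_distrib]
  norm_num
  ring
end

section
/- For every integer n ≥ 5, the energy of the circulant graph C^{1,2}_n equals 4·(D_{⌊n/6⌋}(2π/n) + D_{⌊n/6⌋}(4π/n)), where D_m(x) = sin((m+1/2)x)/sin(x/2) is the Dirichlet kernel. -/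
open Real Finset Matrix

/-- The circulant graph `C^{1,γ}_n` on vertex set `ℤ/nℤ`: distinct vertices `u, v`
are adjacent iff `u - v ∈ {1, -1, γ, -γ}` (mod `n`). -/
def circGraph (n γ : ℕ) : SimpleGraph (ZMod n) :=
  SimpleGraph.circulantGraph ({1, (γ : ZMod n)} : Set (ZMod n))

noncomputable instance (n γ : ℕ) : DecidableRel (circGraph n γ).Adj :=
  Classical.decRel _

/-- The adjacency matrix of a finite simple graph is Hermitian as a real matrix. -/
theorem adjMatrix_isHermitian {V : Type*} [Fintype V] [DecidableEq V]
    (G : SimpleGraph V) [DecidableRel G.Adj] : (G.adjMatrix ℝ).IsHermitian := by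
  rw [Matrix.IsHermitian, Matrix.conjTranspose_eq_transpose_of_trivial]
  exact G.isSymm_adjMatrix

/-- The energy of a finite simple graph: the sum of the absolute values of the
eigenvalues (with multiplicity) of its adjacency matrix. -/
noncomputable def graphEnergy {V : Type*} [Fintype V] [DecidableEq V]
    (G : SimpleGraph V) [DecidableRel G.Adj] : ℝ :=
  ∑ i, |(adjMatrix_isHermitian G).eigenvalues i|

/-!
The adjacency matrix of `C^{1,2}_n` is circulant, so the discrete Fourier matrix diagonalises it:
its eigenvalues are `λ_j = 2 cos(2πj/n) + 2 cos(4πj/n) = 2 (2c - 1)(c + 1)` with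
`c = cos(2πj/n)`, `0 ≤ j < n`. Hence `λ_j ≥ 0` exactly for `j ≤ m` or `n - j ≤ m`, where
`m = ⌊n/6⌋`, and `λ_j ≤ 0` otherwise. As `∑ λ_j = tr A = 0`, the energy is
`∑ |λ_j| = 2 ∑ λ_j⁺ = 2 (λ_0 + 2 ∑_{j=1}^m λ_j)`,
and `1 + 2 ∑_{j=1}^m cos(jx) = D_m(x)`.
-/

open Polynomial

namespace Matrix

variable {ι : Type*} [Fintype ι] [DecidableEq ι]

theorem charpoly_eq_of_mul_eq_mul {R : Type*} [CommRing R] {A D F G : Matrix ι ι R}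
    (hGF : G * F = 1) (h : A * F = F * D) : A.charpoly = D.charpoly := by
  have hA : A = F * (D * G) := by
    rw [← mul_assoc, ← h, mul_assoc, mul_eq_one_comm.mp hGF, mul_one]
  rw [hA, charpoly_mul_comm, mul_assoc, hGF, mul_one]

theorem IsHermitian.sum_eigenvalues_eq {M : Type*} [AddCommMonoid M] {A : Matrix ι ι ℝ}
    (hA : A.IsHermitian) {μ : ι → ℝ}
    (h : (A.map (algebraMap ℝ ℂ)).charpoly = ∏ i, (X - C (μ i : ℂ))) (f : ℝ → M) :
    ∑ i, f (hA.eigenvalues i) = ∑ i, f (μ i) := by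
  have hroots : univ.val.map (fun i ↦ (hA.eigenvalues i : ℂ)) =
      univ.val.map (fun i ↦ (μ i : ℂ)) := by
    have := congrArg Polynomial.roots h
    rw [charpoly_map, hA.charpoly_eq] at this
    simpa [Polynomial.map_prod, roots_prod, prod_ne_zero_iff, X_sub_C_ne_zero] using this
  have hreal : univ.val.map hA.eigenvalues = univ.val.map μ :=
    Multiset.map_injective Complex.ofReal_injective <| by
      simpa [Multiset.map_map, Function.comp_def] using hroots
  simpa only [sum_eq_multiset_sum, Multiset.map_map, Function.comp_def] using
    congrArg (fun s ↦ (s.map f).sum) hreal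

end Matrix

namespace ZMod

theorem natCast_ne_zero_of_lt {n a : ℕ} (ha : 0 < a) (han : a < n) : (a : ZMod n) ≠ 0 :=
  (natCast_eq_zero_iff a n).not.2 (Nat.not_dvd_of_pos_of_lt ha han)

noncomputable def dftMatrix (n : ℕ) [NeZero n] : Matrix (ZMod n) (ZMod n) ℂ :=
  of fun j k ↦ stdAddChar (j * k)

variable {n : ℕ} [NeZero n]

theorem inv_dftMatrix_mul :
    ((n : ℂ)⁻¹ • of fun j k : ZMod n ↦ stdAddChar (-(j * k))) * dftMatrix n = 1 := by
  ext j k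
  have hsum : ∑ l : ZMod n, stdAddChar (-(j * l)) * stdAddChar (l * k) =
      ∑ l : ZMod n, stdAddChar (l * (k - j)) := by
    refine sum_congr rfl fun l _ ↦ ?_
    rw [← AddChar.map_add_eq_mul]
    ring_nf
  rw [smul_mul, Matrix.smul_apply, mul_apply]
  simp only [of_apply, dftMatrix, hsum, AddChar.sum_mulShift _ (isPrimitive_stdAddChar n),
    sub_eq_zero, one_apply, eq_comm (a := k)]
  split_ifs <;> simp [NeZero.ne]

theorem circulant_mul_dftMatrix (v : ZMod n → ℂ) :
    circulant v * dftMatrix n =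
      dftMatrix n * diagonal fun k ↦ ∑ l, v l * stdAddChar (-(l * k)) := by
  ext i k
  rw [mul_diagonal, mul_apply, mul_sum, ← (Equiv.subLeft i).sum_comp]
  refine sum_congr rfl fun l _ ↦ ?_
  simp only [circulant_apply, dftMatrix, of_apply, Equiv.subLeft_apply, sub_sub_cancel]
  rw [mul_left_comm, ← AddChar.map_add_eq_mul, mul_comm]
  ring_nf

theorem stdAddChar_add_stdAddChar_neg (j : ℤ) :
    stdAddChar (j : ZMod n) + stdAddChar (-j : ZMod n) = 2 * Real.cos (2 * π * j / n) := by
  rw [← Int.cast_neg, stdAddChar_coe, stdAddChar_coe, Complex.ofReal_cos, two_mul,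
    Complex.cos, Int.cast_neg]
  push_cast
  ring_nf

theorem sum_val_eq_sum_range {M : Type*} [AddCommMonoid M] (f : ℕ → M) :
    ∑ k : ZMod n, f k.val = ∑ j ∈ range n, f j :=
  sum_nbij (·.val) (fun k _ ↦ mem_range.2 (val_lt k)) (val_injective n).injOn
    (fun j hj ↦ ⟨j, mem_univ _, val_cast_of_lt (mem_range.1 hj)⟩) fun _ _ ↦ rfl

end ZMod

theorem Matrix.charpoly_circulant_zmod {n : ℕ} [NeZero n] (v : ZMod n → ℂ) :
    (circulant v).charpoly = ∏ k, (X - C (∑ l, v l * ZMod.stdAddChar (-(l * k)))) := by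
  rw [charpoly_eq_of_mul_eq_mul ZMod.inv_dftMatrix_mul (ZMod.circulant_mul_dftMatrix v),
    charpoly_diagonal]

theorem SimpleGraph.adjMatrix_circulantGraph {G α : Type*} [AddGroup G] [Zero α] [One α]
    (s : Set G) [DecidableRel (circulantGraph s).Adj] :
    (circulantGraph s).adjMatrix α = circulant (((s ∪ -s) \ {0}).indicator 1) := by
  classical
  ext i j
  rw [adjMatrix_apply, circulant_apply, Set.indicator_apply]
  refine if_congr ?_ rfl rfl
  simp [sub_eq_zero]
  tauto

noncomputable def circOneTwoEigenvalue (n j : ℕ) : ℝ :=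
  2 * cos (2 * π * j / n) + 2 * cos (4 * π * j / n)

theorem sum_stdAddChar_eq_circOneTwoEigenvalue {n : ℕ} [NeZero n] (hn : 5 ≤ n) (k : ZMod n) :
    ∑ l ∈ ({1, -1, 2, -2} : Finset (ZMod n)), ZMod.stdAddChar (-(l * k)) =
      (circOneTwoEigenvalue n k.val : ℂ) := by
  have hne : ∀ a : ℕ, 0 < a → a < 5 → (a : ZMod n) ≠ 0 := fun a ha ha5 ↦
    ZMod.natCast_ne_zero_of_lt ha (by omega)
  have h1 := hne 1 (by norm_num) (by norm_num)
  have h2 := hne 2 (by norm_num) (by norm_num)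
  have h3 := hne 3 (by norm_num) (by norm_num)
  have h4 := hne 4 (by norm_num) (by norm_num)
  push_cast at h1 h2 h3 h4
  rw [sum_insert (by simp only [mem_insert, mem_singleton, not_or]; exact
      ⟨fun h ↦ h2 (by linear_combination h), fun h ↦ h1 (by linear_combination -h),
        fun h ↦ h3 (by linear_combination h)⟩),
    sum_insert (by simp only [mem_insert, mem_singleton, not_or]; exact
      ⟨fun h ↦ h3 (by linear_combination -h), fun h ↦ h1 (by linear_combination h)⟩),
    sum_insert (by simp only [mem_singleton]; exact fun h ↦ h4 (by linear_combination h)),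
    sum_singleton]
  have e1 := ZMod.stdAddChar_add_stdAddChar_neg (n := n) (k.val : ℤ)
  have e2 := ZMod.stdAddChar_add_stdAddChar_neg (n := n) (2 * k.val : ℤ)
  push_cast [ZMod.natCast_zmod_val] at e1 e2
  rw [circOneTwoEigenvalue]
  push_cast
  rw [show 4 * (π : ℂ) * k.val / n = 2 * π * (2 * k.val) / n by ring, ← e1, ← e2]
  ring_nf

theorem charpoly_adjMatrix_circGraph_two {n : ℕ} [NeZero n] (hn : 5 ≤ n) :
    (((circGraph n 2).adjMatrix ℝ).map (algebraMap ℝ ℂ)).charpoly =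
      ∏ k : ZMod n, (X - C (circOneTwoEigenvalue n k.val : ℂ)) := by
  have hmap : ((circGraph n 2).adjMatrix ℝ).map (algebraMap ℝ ℂ) =
      (circGraph n 2).adjMatrix ℂ := by
    ext i j
    simp [SimpleGraph.adjMatrix_apply, apply_ite]
  -- `circGraph` carries a classical `DecidableRel` instance, not the one of `circulantGraph`
  have hcirc : (circGraph n 2).adjMatrix ℂ = _ :=
    @SimpleGraph.adjMatrix_circulantGraph _ ℂ _ _ _ {1, ((2 : ℕ) : ZMod n)}
      (inferInstance : DecidableRel (circGraph n 2).Adj)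
  have h1 : (1 : ZMod n) ≠ 0 := by exact_mod_cast ZMod.natCast_ne_zero_of_lt one_pos (by omega)
  have h2 : (2 : ZMod n) ≠ 0 := by exact_mod_cast ZMod.natCast_ne_zero_of_lt two_pos (by omega)
  have hjumps : (({1, ((2 : ℕ) : ZMod n)} ∪ -{1, ((2 : ℕ) : ZMod n)}) \ {0} : Set (ZMod n)) =
      ↑({1, -1, 2, -2} : Finset (ZMod n)) := by
    ext x
    simp only [Nat.cast_ofNat, Set.mem_sdiff, Set.mem_union, Set.mem_insert_iff,
      Set.mem_singleton_iff, Set.mem_neg, neg_eq_iff_eq_neg, coe_insert, coe_singleton]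
    grind
  rw [hmap, hcirc, charpoly_circulant_zmod, hjumps]
  refine prod_congr rfl fun k _ ↦ ?_
  rw [← sum_stdAddChar_eq_circOneTwoEigenvalue hn k]
  simp only [Set.indicator_apply, mem_coe, Pi.one_apply, ite_mul, one_mul, zero_mul,
    sum_ite_mem, univ_inter]

theorem sum_eigenvalues_circGraph_two {M : Type*} [AddCommMonoid M] {n : ℕ} [NeZero n]
    (hn : 5 ≤ n) (f : ℝ → M) :
    ∑ i, f ((adjMatrix_isHermitian (circGraph n 2)).eigenvalues i) =
      ∑ j ∈ range n, f (circOneTwoEigenvalue n j) := by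
  rw [(adjMatrix_isHermitian _).sum_eigenvalues_eq (charpoly_adjMatrix_circGraph_two hn),
    ZMod.sum_val_eq_sum_range (fun j ↦ f (circOneTwoEigenvalue n j))]

theorem circOneTwoEigenvalue_eq_mul (n j : ℕ) :
    circOneTwoEigenvalue n j =
      2 * (2 * cos (2 * π * j / n) - 1) * (cos (2 * π * j / n) + 1) := by
  rw [circOneTwoEigenvalue, show 4 * π * j / n = 2 * (2 * π * j / n) by ring, cos_two_mul]
  ring

theorem circOneTwoEigenvalue_nonneg {n j : ℕ} (h : 6 * j ≤ n) :
    0 ≤ circOneTwoEigenvalue n j := by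
  have hθ : 2 * π * j / n ≤ π / 3 :=
    div_le_of_le_mul₀ (by positivity) (by positivity) <| by
      have : (6 * j : ℝ) ≤ n := by exact_mod_cast h
      nlinarith [pi_pos]
  have hcos : 1 / 2 ≤ cos (2 * π * j / n) := by
    rw [← cos_pi_div_three]
    exact cos_le_cos_of_nonneg_of_le_pi (by positivity) (by linarith [pi_pos]) hθ
  rw [circOneTwoEigenvalue_eq_mul]
  nlinarith [neg_one_le_cos (2 * π * j / n)]

theorem circOneTwoEigenvalue_nonpos {n j : ℕ} (h₁ : n < 6 * j) (h₂ : 6 * j < 5 * n) :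
    circOneTwoEigenvalue n j ≤ 0 := by
  have hn : (0 : ℝ) < n := by exact_mod_cast (show 0 < n by omega)
  have h₁' : (n : ℝ) < 6 * j := by exact_mod_cast h₁
  have h₂' : (6 * j : ℝ) < 5 * n := by exact_mod_cast h₂
  set θ := 2 * π * j / n with hθ
  have hlo : π / 3 ≤ θ := by rw [hθ, le_div_iff₀ hn]; nlinarith [pi_pos]
  have hhi : θ ≤ 5 * π / 3 := by rw [hθ, div_le_iff₀ hn]; nlinarith [pi_pos]
  -- `cos θ = - cos |θ - π|` with `|θ - π| ≤ 2π/3`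
  have hcos : cos θ ≤ 1 / 2 := by
    have hmid : cos (2 * π / 3) ≤ cos |θ - π| :=
      cos_le_cos_of_nonneg_of_le_pi (abs_nonneg _) (by linarith [pi_pos])
        (abs_le.2 ⟨by linarith, by linarith⟩)
    rw [cos_abs, cos_sub_pi, show 2 * π / 3 = π - π / 3 by ring, cos_pi_sub,
      cos_pi_div_three] at hmid
    linarith
  rw [circOneTwoEigenvalue_eq_mul, ← hθ]
  nlinarith [neg_one_le_cos θ]

theorem circOneTwoEigenvalue_self_sub {n j : ℕ} (hj : j ≤ n) :
    circOneTwoEigenvalue n (n - j) = circOneTwoEigenvalue n j := by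
  rcases n.eq_zero_or_pos with rfl | hn
  · rw [Nat.le_zero.1 hj]
  have hn' : (n : ℝ) ≠ 0 := by positivity
  simp only [circOneTwoEigenvalue, Nat.cast_sub hj]
  rw [show 2 * π * (n - j : ℝ) / n = 2 * π - 2 * π * j / n by field_simp,
    show 4 * π * (n - j : ℝ) / n = (2 : ℕ) * (2 * π) - 4 * π * j / n by
      push_cast; field_simp; ring,
    cos_two_pi_sub, cos_nat_mul_two_pi_sub]

theorem sum_range_posPart_circOneTwoEigenvalue {n : ℕ} (hn : 0 < n) :
    ∑ j ∈ range n, (circOneTwoEigenvalue n j)⁺ =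
      4 + 2 * ∑ j ∈ range (n / 6), circOneTwoEigenvalue n (j + 1) := by
  set m := n / 6
  have hm : 6 * m ≤ n ∧ n < 6 * m + 6 := by omega
  have hhead : ∑ j ∈ range (m + 1), (circOneTwoEigenvalue n j)⁺ =
      4 + ∑ j ∈ range m, circOneTwoEigenvalue n (j + 1) := by
    rw [sum_congr rfl fun j hj ↦ posPart_eq_self.2 (circOneTwoEigenvalue_nonneg (by
      rw [mem_range] at hj; omega)), sum_range_succ', add_comm]
    norm_num [circOneTwoEigenvalue]
  have hmiddle : ∑ j ∈ range (n - 2 * m - 1), (circOneTwoEigenvalue n (m + 1 + j))⁺ = 0 :=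
    sum_eq_zero fun j hj ↦ posPart_eq_zero.2 (circOneTwoEigenvalue_nonpos (by omega) (by
      rw [mem_range] at hj; omega))
  have htail : ∑ j ∈ range m, (circOneTwoEigenvalue n (m + 1 + (n - 2 * m - 1) + j))⁺ =
      ∑ j ∈ range m, circOneTwoEigenvalue n (j + 1) := by
    conv_rhs => rw [← sum_range_reflect]
    refine sum_congr rfl fun j hj ↦ ?_
    rw [mem_range] at hj
    rw [show m + 1 + (n - 2 * m - 1) + j = n - (m - j) by omega,
      circOneTwoEigenvalue_self_sub (by omega), show m - 1 - j + 1 = m - j by omega]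
    exact posPart_eq_self.2 (circOneTwoEigenvalue_nonneg (by omega))
  rw [show range n = range (m + 1 + (n - 2 * m - 1) + m) by congr 1; omega, sum_range_add,
    sum_range_add, hhead, hmiddle, htail]
  ring

theorem DKern_eq_one_add_two_mul_sum_cos (m : ℕ) {x : ℝ} (hx : sin (x / 2) ≠ 0) :
    DKern m x = 1 + 2 * ∑ j ∈ range m, cos ((j + 1) * x) := by
  rw [DKern, div_eq_iff hx]
  induction m with
  | zero => simp [div_eq_inv_mul]
  | succ m ih =>
    have hstep : sin ((m + 1 + 1 / 2) * x) - sin ((m + 1 / 2) * x) =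
        2 * sin (x / 2) * cos ((m + 1) * x) := by
      rw [sin_sub_sin]; ring_nf
    rw [sum_range_succ]
    push_cast
    linear_combination hstep + ih

theorem DKern_add_DKern_eq_sum_circOneTwoEigenvalue {n : ℕ} (hn : 3 ≤ n) (m : ℕ) :
    DKern m (2 * π / n) + DKern m (4 * π / n) =
      2 + ∑ j ∈ range m, circOneTwoEigenvalue n (j + 1) := by
  have hn' : (3 : ℝ) ≤ n := by exact_mod_cast hn
  have hsin : ∀ c : ℝ, 0 < c → c < 6 → sin (c * π / n / 2) ≠ 0 := fun c hc0 hc6 ↦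
    (sin_pos_of_pos_of_lt_pi (by positivity) (by
      rw [div_div, div_lt_iff₀ (by positivity)]; nlinarith [pi_pos])).ne'
  have hcos : ∀ c : ℝ, ∑ j ∈ range m, cos ((j + 1) * (c * π / n)) =
      ∑ j ∈ range m, cos (c * π * ↑(j + 1) / n) :=
    fun c ↦ sum_congr rfl fun j _ ↦ by push_cast; ring_nf
  rw [DKern_eq_one_add_two_mul_sum_cos m (hsin 2 (by norm_num) (by norm_num)),
    DKern_eq_one_add_two_mul_sum_cos m (hsin 4 (by norm_num) (by norm_num)), hcos, hcos]
  simp only [circOneTwoEigenvalue, sum_add_distrib, ← mul_sum]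
  ring

/-- For every integer `n ≥ 5`, the energy of the circulant graph `C^{1,2}_n` equals
`4 (D_{⌊n/6⌋}(2π/n) + D_{⌊n/6⌋}(4π/n))`. -/
theorem energy_circulant_one_two (n : ℕ) [NeZero n] (hn : 5 ≤ n) :
    graphEnergy (circGraph n 2) =
      4 * (DKern (n / 6) (2 * π / n) + DKern (n / 6) (4 * π / n)) := by
  have hsum : ∑ j ∈ range n, circOneTwoEigenvalue n j = 0 := by
    have htrace := (adjMatrix_isHermitian (circGraph n 2)).trace_eq_sum_eigenvalues
    rw [SimpleGraph.trace_adjMatrix] at htrace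
    simpa [sum_eigenvalues_circGraph_two hn (fun x ↦ x)] using htrace.symm
  have habs : ∀ x : ℝ, |x| = 2 * x⁺ - x := fun x ↦ by
    linarith [posPart_add_negPart x, posPart_sub_negPart x]
  rw [graphEnergy, sum_eigenvalues_circGraph_two hn, sum_congr rfl fun j _ ↦ habs _,
    sum_sub_distrib, ← mul_sum, hsum, sum_range_posPart_circOneTwoEigenvalue (by omega),
    DKern_add_DKern_eq_sum_circOneTwoEigenvalue (by omega)]
  ring
end

section
/- Let γ ≥ 3 and n ≥ 2(γ+1) be integers. Then 2·∑_{k=0}^{n−1} |cos(2πk/n) + cos(2πγk/n)| = 4·∑_{m∈{1,γ}} ( ∑_{l=0}^{⌈γ/2⌉−1} D_{⌊(2l+1)n/(2(γ+1))⌋}(2πm/n) − ∑_{l=0}^{⌈γ/2⌉−2} D_{⌊(2l+1)n/(2(γ−1))⌋}(2πm/n) ), where D_m(x) = sin((m+1/2)x)/sin(x/2) is the Dirichlet kernel, ⌊·⌋ is the floor function and ⌈·⌉ is the ceiling function. -/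
open Real Finset

lemma dkern_eq (x : ℝ) (hx : Real.sin (x/2) ≠ 0) (M : ℕ) :
    DKern M x = 2 * ∑ j ∈ Finset.range (M+1), Real.cos (j*x) - 1 := by
  induction M with
  | zero =>
    simp only [DKern, Nat.cast_zero, zero_add, Finset.range_one, Finset.sum_singleton,
      Nat.cast_zero, zero_mul, Real.cos_zero, mul_one]
    rw [show (1/2 : ℝ) * x = x/2 by ring, div_self hx]; norm_num
  | succ M ih =>
    have key : Real.sin (((M:ℝ)+1+1/2)*x) - Real.sin (((M:ℝ)+1/2)*x)
        = 2 * Real.cos (((M:ℝ)+1)*x) * Real.sin (x/2) := by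
      rw [Real.sin_sub_sin]
      rw [show (((M:ℝ)+1+1/2)*x - ((M:ℝ)+1/2)*x)/2 = x/2 by ring,
          show (((M:ℝ)+1+1/2)*x + ((M:ℝ)+1/2)*x)/2 = ((M:ℝ)+1)*x by ring]
      ring
    have step : DKern (M+1) x = DKern M x + 2 * Real.cos (((M:ℝ)+1)*x) := by
      unfold DKern
      have h2 : ((M+1 : ℕ) : ℝ) + 1/2 = ((M:ℝ)+1+1/2) := by push_cast; ring
      rw [h2, div_add' _ _ _ hx]
      congr 1
      linarith [key]
    rw [step, ih, Finset.sum_range_succ _ (M+1)]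
    push_cast
    ring

lemma sin_pi_mul_pos (n m : ℕ) (h1 : 1 ≤ m) (h2 : m < n) : 0 < Real.sin (π*m/n) := by
  have hn : (0:ℝ) < n := by exact_mod_cast (by omega : 0 < n)
  apply Real.sin_pos_of_pos_of_lt_pi
  · have : (0:ℝ) < m := by exact_mod_cast h1
    positivity
  · rw [div_lt_iff₀ hn]
    have : (m:ℝ) < n := by exact_mod_cast h2
    nlinarith [Real.pi_pos]

lemma sum_cos_eq_zero (n m : ℕ) (h1 : 1 ≤ m) (h2 : m < n) :
    ∑ j ∈ Finset.range n, Real.cos (j * (2*π*m/n)) = 0 := by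
  have hn : (0:ℝ) < n := by exact_mod_cast (by omega : 0 < n)
  set x : ℝ := 2*π*m/n with hxdef
  have hx2 : x/2 = π*m/n := by rw [hxdef]; ring
  have hs : Real.sin (x/2) ≠ 0 := by rw [hx2]; exact (sin_pi_mul_pos n m h1 h2).ne'
  have hd := dkern_eq x hs (n-1)
  have hn1 : n - 1 + 1 = n := by omega
  rw [hn1] at hd
  have hval : DKern (n-1) x = -1 := by
    unfold DKern
    have hc : (((n-1:ℕ):ℝ) + 1/2) * x = m * (2*π) - x/2 := by
      have : ((n-1:ℕ):ℝ) = (n:ℝ) - 1 := by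
        have : (1:ℝ) ≤ n := by exact_mod_cast (by omega : 1 ≤ n)
        push_cast [Nat.cast_sub (by omega : 1 ≤ n)]; ring
      rw [this, hxdef]
      field_simp
      ring
    rw [hc, Real.sin_nat_mul_two_pi_sub, neg_div, div_self hs]
  rw [hval] at hd
  linarith [hd]

lemma card_filter_upward (N t : ℕ) (P : ℕ → Prop) [DecidablePred P] (h : ∀ l, P l ↔ t ≤ l) :
    ((Finset.range N).filter P).card = N - min t N := by
  have he : (Finset.range N).filter P = Finset.Ico (min t N) N := by
    ext l
    simp only [Finset.mem_filter, Finset.mem_range, Finset.mem_Ico, h]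
    omega
  rw [he, Nat.card_Ico]

section
variable (n q k m : ℕ)

section
variable (n q k m : ℕ)

lemma thresh_le (hm1 : 2*n*m < 2*q*k + n) (hm2 : 2*q*k + n < 2*n*m + 2*n) (l : ℕ) :
    2*q*k ≤ (2*l+1)*n ↔ m ≤ l := by
  constructor
  · intro h
    by_contra hc
    push_neg at hc
    have hml : n*(l+1) ≤ n*m := Nat.mul_le_mul_left n (by omega)
    nlinarith
  · intro h
    have hml : n*m ≤ n*l := Nat.mul_le_mul_left n h
    nlinarith

lemma thresh_refl (hk : k ≤ n) (hm1 : 2*n*m < 2*q*k + n) (hm2 : 2*q*k + n < 2*n*m + 2*n)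
    (l : ℕ) : 2*q*(n-k) ≤ (2*l+1)*n ↔ q - m ≤ l := by
  have hsub : 2*q*(n-k) + 2*q*k = 2*q*n := by
    rw [← Nat.mul_add, Nat.sub_add_cancel hk]
  constructor
  · intro h
    have key : 2*n*q < 2*n*(l+m+1) := by nlinarith
    have := Nat.lt_of_mul_lt_mul_left key
    omega
  · intro h
    -- q ≤ l + m  (or q - m ≤ l in ℕ): show 2*q*(n-k) ≤ (2l+1)*n
    have hq : n*q ≤ n*(l+m) ∨ q ≤ m := by
      rcases le_or_gt q m with h'|h'
      · right; exact h'
      · left; exact Nat.mul_le_mul_left n (by omega)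
    rcases hq with hq|hq
    · nlinarith
    · -- q ≤ m : then 2*q*k ≥ ... show directly
      have : n*q ≤ n*m := Nat.mul_le_mul_left n hq
      nlinarith
end

def cntP (n γ : ℕ) (j : ℕ) : ℕ :=
  ((Finset.range ((γ+1)/2)).filter (fun l => 2*(γ+1)*j ≤ (2*l+1)*n)).card

def cntM (n γ : ℕ) (j : ℕ) : ℕ :=
  ((Finset.range ((γ+1)/2 - 1)).filter (fun l => 2*(γ-1)*j ≤ (2*l+1)*n)).card

lemma count_core (n γ k mp mm : ℕ) (hγ : 3 ≤ γ) (hn : 2*(γ+1) ≤ n)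
    (hk1 : 1 ≤ k) (hk2 : k < n)
    (hp1 : 2*n*mp < 2*(γ+1)*k + n) (hp2 : 2*(γ+1)*k + n < 2*n*mp + 2*n)
    (hq1 : 2*n*mm < 2*(γ-1)*k + n) (hq2 : 2*(γ-1)*k + n < 2*n*mm + 2*n) :
    ((cntP n γ k + cntP n γ (n-k) : ℤ) - (cntM n γ k + cntM n γ (n-k)))
      = if (mp + mm) % 2 = 0 then 1 else 0 := by
  have e1 : cntP n γ k = (γ+1)/2 - min mp ((γ+1)/2) :=
    card_filter_upward _ mp _ (thresh_le n (γ+1) k mp hp1 hp2)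
  have e2 : cntP n γ (n-k) = (γ+1)/2 - min ((γ+1) - mp) ((γ+1)/2) :=
    card_filter_upward _ _ _ (thresh_refl n (γ+1) k mp (le_of_lt hk2) hp1 hp2)
  have e3 : cntM n γ k = ((γ+1)/2-1) - min mm ((γ+1)/2-1) :=
    card_filter_upward _ mm _ (thresh_le n (γ-1) k mm hq1 hq2)
  have e4 : cntM n γ (n-k) = ((γ+1)/2-1) - min ((γ-1) - mm) ((γ+1)/2-1) :=
    card_filter_upward _ _ _ (thresh_refl n (γ-1) k mm (le_of_lt hk2) hq1 hq2)
  rw [e1, e2, e3, e4]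
  clear e1 e2 e3 e4
  have div2 : ∀ a b : ℕ, 2*n*a < 2*n*b → a < b := fun a b h => Nat.lt_of_mul_lt_mul_left h
  have hkey : (γ+1)*k = (γ-1)*k + 2*k := by
    have : γ + 1 = (γ-1) + 2 := by omega
    rw [this]; ring
  have hqk : (γ+1)*k ≤ (γ+1)*n := Nat.mul_le_mul_left _ (le_of_lt hk2)
  have hb2 : mm ≤ mp := by
    have : 2*n*mm < 2*n*(mp+1) := by linarith
    have := div2 _ _ this; omega
  rcases le_or_gt (2*k) n with hcase | hcase
  · have h2qk : (γ+1)*(2*k) ≤ (γ+1)*n := Nat.mul_le_mul_left _ hcase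
    have h2pk : (γ-1)*(2*k) ≤ (γ-1)*n := Nat.mul_le_mul_left _ hcase
    have h2qk' : 2*((γ+1)*k) ≤ (γ+1)*n := by rw [show 2*((γ+1)*k) = (γ+1)*(2*k) by ring]; exact h2qk
    have h2pk' : 2*((γ-1)*k) ≤ (γ-1)*n := by rw [show 2*((γ-1)*k) = (γ-1)*(2*k) by ring]; exact h2pk
    have hpn : (γ-1)*n + 2*n = (γ+1)*n := by
      have : γ + 1 = (γ-1) + 2 := by omega
      rw [this]; ring
    have hmpL : 2*mp ≤ γ+1 := by
      have : 2*n*(2*mp) < 2*n*(γ+2) := by linarith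
      have := div2 _ _ this; omega
    have hmmL : 2*mm ≤ γ-1 := by
      have : 2*n*(2*mm) < 2*n*(γ-1+1) := by linarith
      have := div2 _ _ this; omega
    have hup : mp ≤ mm + 1 := by
      have : 2*n*mp < 2*n*(mm+2) := by linarith
      have := div2 _ _ this; omega
    rw [min_eq_left (by omega : mp ≤ (γ+1)/2),
        min_eq_right (by omega : (γ+1)/2 ≤ (γ+1) - mp),
        min_eq_left (by omega : mm ≤ (γ+1)/2 - 1),
        min_eq_right (by omega : (γ+1)/2 - 1 ≤ (γ-1) - mm)]
    rcases Nat.even_or_odd (mp + mm) with he | he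
    · rw [Nat.even_iff] at he
      rw [if_pos he]; omega
    · rw [Nat.odd_iff] at he
      rw [if_neg (by omega)]; omega
  · have h2qk : (γ+1)*n ≤ (γ+1)*(2*k) := Nat.mul_le_mul_left _ (le_of_lt hcase)
    have h2pk : (γ-1)*n ≤ (γ-1)*(2*k) := Nat.mul_le_mul_left _ (le_of_lt hcase)
    have h2qk' : (γ+1)*n ≤ 2*((γ+1)*k) := by rw [show 2*((γ+1)*k) = (γ+1)*(2*k) by ring]; exact h2qk
    have h2pk' : (γ-1)*n ≤ 2*((γ-1)*k) := by rw [show 2*((γ-1)*k) = (γ-1)*(2*k) by ring]; exact h2pk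
    have hpn : (γ-1)*n + 2*n = (γ+1)*n := by
      have : γ + 1 = (γ-1) + 2 := by omega
      rw [this]; ring
    have hmpL : γ+1 ≤ 2*mp := by
      have : 2*n*(γ+1) < 2*n*(2*mp+1) := by linarith
      have := div2 _ _ this; omega
    have hmmL : γ-1 ≤ 2*mm := by
      have : 2*n*(γ-1) < 2*n*(2*mm+1) := by linarith
      have := div2 _ _ this; omega
    have hmq : mp ≤ γ+1 := by
      have : 2*n*mp < 2*n*(γ+2) := by linarith
      have := div2 _ _ this; omega
    have hmq2 : mm ≤ γ-1 := by
      have : 2*n*mm < 2*n*(γ-1+1) := by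
        have hpk2 : (γ-1)*k ≤ (γ-1)*n := Nat.mul_le_mul_left _ (le_of_lt hk2)
        linarith
      have := div2 _ _ this; omega
    have hlow : mm + 1 ≤ mp := by
      have : 2*n*mm < 2*n*mp := by linarith
      have := div2 _ _ this; omega
    have hup : mp ≤ mm + 2 := by
      have : 2*n*mp < 2*n*(mm+3) := by linarith
      have := div2 _ _ this; omega
    rw [min_eq_right (by omega : (γ+1)/2 ≤ mp),
        min_eq_left (by omega : (γ+1) - mp ≤ (γ+1)/2),
        min_eq_right (by omega : (γ+1)/2 - 1 ≤ mm),
        min_eq_left (by omega : (γ-1) - mm ≤ (γ+1)/2 - 1)]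
    rcases Nat.even_or_odd (mp + mm) with he | he
    · rw [Nat.even_iff] at he
      rw [if_pos he]; omega
    · rw [Nat.odd_iff] at he
      rw [if_neg (by omega)]; omega

noncomputable def fval (n γ : ℕ) (k : ℕ) : ℝ :=
  Real.cos (2*π*k/n) + Real.cos (2*π*γ*k/n)

-- sign of cosine at π*c*k/n with sandwich

lemma cos_sign_aux (n c k m : ℕ) (hn : 0 < n)
    (h1 : 2*n*m < 2*c*k + n) (h2 : 2*c*k + n < 2*n*m + 2*n) :
    ∃ y : ℝ, 0 < y ∧ Real.cos (π*c*k/n) = (-1)^m * y := by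
  have hnR : (0:ℝ) < n := by exact_mod_cast hn
  set X : ℝ := π*c*k/n with hX
  refine ⟨Real.cos (X - m*π), ?_, ?_⟩
  · apply Real.cos_pos_of_mem_Ioo
    constructor
    · have h1R : 2*(n:ℝ)*m < 2*c*k + n := by exact_mod_cast h1
      rw [hX]
      rw [show π*(c:ℝ)*k/n - m*π = π * ((2*(c:ℝ)*k + n - 2*n*m) / (2*n)) - π/2 by
        field_simp; ring]
      have hpos : (0:ℝ) < (2*(c:ℝ)*k + n - 2*n*m) / (2*n) := by
        have : (0:ℝ) < 2*(c:ℝ)*k + n - 2*n*m := by linarith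
        positivity
      nlinarith [Real.pi_pos, hpos]
    · have h2R : 2*(c:ℝ)*k + n < 2*n*m + 2*n := by exact_mod_cast h2
      rw [hX]
      rw [show π*(c:ℝ)*k/n - m*π = π/2 - π * ((2*(n:ℝ)*m + 2*n - (2*c*k + n)) / (2*n)) by
        field_simp; ring]
      have hpos : (0:ℝ) < (2*(n:ℝ)*m + 2*n - (2*c*k + n)) / (2*n) := by
        have : (0:ℝ) < 2*(n:ℝ)*m + 2*n - (2*c*k + n) := by linarith
        positivity
      nlinarith [Real.pi_pos, hpos]
  · rw [show X - (m:ℝ)*π = X - (m:ℕ)*π from rfl]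
    rw [show Real.cos (X - (m:ℕ)*π) = (-1)^m * Real.cos X from Real.cos_sub_nat_mul_pi X m]
    rcases Nat.even_or_odd m with he | he
    · rw [he.neg_one_pow]; ring
    · rw [he.neg_one_pow]; ring

lemma fval_factor (n γ k : ℕ) (hγ : 1 ≤ γ) (hn : 0 < n) :
    fval n γ k = 2 * Real.cos (π*(γ+1)*k/n) * Real.cos (π*(γ-1:ℕ)*k/n) := by
  unfold fval
  rw [Real.cos_add_cos]
  have hc : ((γ-1:ℕ):ℝ) = (γ:ℝ) - 1 := by
    have : (1:ℝ) ≤ (γ:ℝ) := by exact_mod_cast hγ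
    push_cast [Nat.cast_sub hγ]; ring
  rw [hc]
  have hnR : ((n:ℝ)) ≠ 0 := Nat.cast_ne_zero.mpr hn.ne'
  congr 1
  · congr 1
    push_cast
    field_simp
    ring
  · rw [show (2*π*(k:ℝ)/n - 2*π*γ*k/n)/2 = -(π*((γ:ℝ)-1)*k/n) by field_simp; ring]
    rw [Real.cos_neg]

lemma div_sandwich (a b : ℕ) (hb : 0 < b) : b*(a/b) ≤ a ∧ a < b*(a/b) + b := by
  constructor
  · rw [mul_comm]; exact Nat.div_mul_le_self a b
  · have h1 := Nat.div_add_mod a b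
    have h2 := Nat.mod_lt a hb
    linarith

lemma termwise (n γ k : ℕ) (hγ : 3 ≤ γ) (hn : 2*(γ+1) ≤ n) (hk1 : 1 ≤ k) (hk2 : k < n) :
    fval n γ k + |fval n γ k| =
      2 * (((cntP n γ k : ℝ) + cntP n γ (n-k)) - ((cntM n γ k : ℝ) + cntM n γ (n-k)))
        * fval n γ k := by
  by_cases hf : fval n γ k = 0
  · simp [hf]
  · have hn0 : 0 < n := by omega
    have hnR : ((n:ℝ)) ≠ 0 := Nat.cast_ne_zero.mpr hn0.ne'
    set mp := (2*(γ+1)*k + n)/(2*n) with hmp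
    set mm := (2*(γ-1)*k + n)/(2*n) with hmm
    obtain ⟨hp1w, hp2⟩ := div_sandwich (2*(γ+1)*k + n) (2*n) (by omega)
    obtain ⟨hq1w, hq2⟩ := div_sandwich (2*(γ-1)*k + n) (2*n) (by omega)
    rw [← hmp] at hp1w hp2
    rw [← hmm] at hq1w hq2
    have hfac := fval_factor n γ k (by omega) hn0
    -- nondegeneracy for plus
    have hp1 : 2*n*mp < 2*(γ+1)*k + n := by
      rcases Nat.lt_or_ge (2*n*mp) (2*(γ+1)*k + n) with h | h
      · exact h
      · exfalso
        have heq : 2*n*mp = 2*(γ+1)*k + n := le_antisymm hp1w h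
        have eqR : 2*(n:ℝ)*mp = 2*((γ:ℝ)+1)*k + n := by exact_mod_cast heq
        have harg : π*((γ:ℝ)+1)*(k:ℝ)/(n:ℝ) = (mp:ℝ)*π - π/2 := by
          rw [div_eq_iff hnR]; linear_combination (-π/2) * eqR
        apply hf
        rw [hfac, harg, Real.cos_nat_mul_pi_sub, Real.cos_pi_div_two]
        ring
    have hq1 : 2*n*mm < 2*(γ-1)*k + n := by
      rcases Nat.lt_or_ge (2*n*mm) (2*(γ-1)*k + n) with h | h
      · exact h
      · exfalso
        have heq : 2*n*mm = 2*(γ-1)*k + n := le_antisymm hq1w h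
        have eqR : 2*(n:ℝ)*mm = 2*((γ-1:ℕ):ℝ)*k + n := by exact_mod_cast heq
        have harg : π*((γ-1:ℕ):ℝ)*(k:ℝ)/(n:ℝ) = (mm:ℝ)*π - π/2 := by
          rw [div_eq_iff hnR]; linear_combination (-π/2) * eqR
        apply hf
        rw [hfac, harg, Real.cos_nat_mul_pi_sub, Real.cos_pi_div_two]
        ring
    -- signs
    obtain ⟨cp, hcp, hcosp⟩ := cos_sign_aux n (γ+1) k mp hn0 (by exact_mod_cast hp1) hp2
    obtain ⟨cm, hcm, hcosm⟩ := cos_sign_aux n (γ-1) k mm hn0 (by exact_mod_cast hq1) hq2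
    have hcast : ((γ+1:ℕ):ℝ) = (γ:ℝ)+1 := by push_cast; ring
    rw [hcast] at hcosp
    have hval : fval n γ k = 2 * ((-1:ℝ))^(mp+mm) * (cp * cm) := by
      rw [hfac, hcosp, hcosm, pow_add]; ring
    -- counting
    have hW := count_core n γ k mp mm hγ hn hk1 hk2 hp1 hp2 hq1 hq2
    have hcoef : (((cntP n γ k : ℝ) + cntP n γ (n-k)) - ((cntM n γ k : ℝ) + cntM n γ (n-k)))
        = (((cntP n γ k + cntP n γ (n-k) : ℤ) - (cntM n γ k + cntM n γ (n-k)) : ℤ) : ℝ) := by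
      push_cast; ring
    rcases Nat.even_or_odd (mp + mm) with he | he
    · have hif := he
      rw [Nat.even_iff] at hif
      rw [hif] at hW
      simp only [if_pos rfl] at hW
      have hpos : 0 < fval n γ k := by
        rw [hval, he.neg_one_pow]
        positivity
      rw [abs_of_pos hpos, hcoef, hW]
      push_cast; ring
    · have hif := he
      rw [Nat.odd_iff] at hif
      rw [hif] at hW
      norm_num at hW
      have hneg : fval n γ k < 0 := by
        rw [hval, he.neg_one_pow]
        nlinarith
      rw [abs_of_neg hneg, hcoef, hW]
      push_cast; ring

lemma swap_sum (n c N : ℕ) (hc : 0 < c) (hN : ∀ l ∈ Finset.range N, (2*l+1)*n / (2*c) < n)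
    (x : ℝ) :
    ∑ l ∈ Finset.range N, ∑ j ∈ Finset.range ((2*l+1)*n/(2*c) + 1), Real.cos (j*x)
      = ∑ j ∈ Finset.range n,
          (((Finset.range N).filter (fun l => 2*c*j ≤ (2*l+1)*n)).card : ℝ) * Real.cos (j*x) := by
  have step1 : ∀ l ∈ Finset.range N,
      ∑ j ∈ Finset.range ((2*l+1)*n/(2*c) + 1), Real.cos (j*x)
        = ∑ j ∈ Finset.range n, if 2*c*j ≤ (2*l+1)*n then Real.cos (j*x) else 0 := by
    intro l hl
    rw [Finset.sum_ite, Finset.sum_const, smul_zero, add_zero]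
    apply Finset.sum_congr
    · ext j
      simp only [Finset.mem_range, Finset.mem_filter]
      constructor
      · intro hj
        have hj' : j ≤ (2*l+1)*n/(2*c) := by omega
        refine ⟨lt_of_le_of_lt hj' (hN l hl), ?_⟩
        rw [show 2*c*j = j*(2*c) by ring]
        exact (Nat.le_div_iff_mul_le (by omega)).mp hj'
      · intro ⟨_, hj⟩
        rw [show 2*c*j = j*(2*c) by ring] at hj
        have := (Nat.le_div_iff_mul_le (by omega : 0 < 2*c)).mpr hj
        omega
    · intros; rfl
  rw [Finset.sum_congr rfl step1, Finset.sum_comm]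
  apply Finset.sum_congr rfl
  intro j _
  rw [Finset.sum_ite, Finset.sum_const, Finset.sum_const_zero, add_zero, nsmul_eq_mul]

lemma dsum_eq (n γ : ℕ) (hγ : 3 ≤ γ) (hn : 2*(γ+1) ≤ n) (x : ℝ) (hx : Real.sin (x/2) ≠ 0) :
    (∑ l ∈ Finset.range ((γ+1)/2), DKern ((2*l+1)*n/(2*(γ+1))) x)
    - (∑ l ∈ Finset.range ((γ+1)/2 - 1), DKern ((2*l+1)*n/(2*(γ-1))) x)
    = 2 * (∑ j ∈ Finset.range n, ((cntP n γ j : ℝ) - cntM n γ j) * Real.cos (j*x)) - 1 := by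
  have hNP : ∀ l ∈ Finset.range ((γ+1)/2), (2*l+1)*n / (2*(γ+1)) < n := by
    intro l hl
    simp only [Finset.mem_range] at hl
    apply Nat.div_lt_of_lt_mul
    have h1 : 2*l+1 < 2*(γ+1) := by omega
    calc (2*l+1)*n < (2*(γ+1))*n := by
          exact (Nat.mul_lt_mul_right (by omega : 0 < n)).mpr h1
      _ = 2*(γ+1)*n := by ring
  have hNM : ∀ l ∈ Finset.range ((γ+1)/2 - 1), (2*l+1)*n / (2*(γ-1)) < n := by
    intro l hl
    simp only [Finset.mem_range] at hl
    apply Nat.div_lt_of_lt_mul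
    have h1 : 2*l+1 < 2*(γ-1) := by omega
    calc (2*l+1)*n < (2*(γ-1))*n := by
          exact (Nat.mul_lt_mul_right (by omega : 0 < n)).mpr h1
      _ = 2*(γ-1)*n := by ring
  rw [Finset.sum_congr rfl (fun l _ => dkern_eq x hx ((2*l+1)*n/(2*(γ+1)))),
      Finset.sum_congr rfl (fun l _ => dkern_eq x hx ((2*l+1)*n/(2*(γ-1))))]
  rw [Finset.sum_sub_distrib, Finset.sum_sub_distrib, ← Finset.mul_sum, ← Finset.mul_sum,
    Finset.sum_const, Finset.sum_const]
  rw [swap_sum n (γ+1) ((γ+1)/2) (by omega) hNP x,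
      swap_sum n (γ-1) ((γ+1)/2 - 1) (by omega) hNM x]
  unfold cntP cntM
  simp only [Finset.card_range, nsmul_eq_mul, mul_one]
  rw [show (∑ j ∈ Finset.range n,
      ((((Finset.range ((γ+1)/2)).filter (fun l => 2*(γ+1)*j ≤ (2*l+1)*n)).card : ℝ)
        - (((Finset.range ((γ+1)/2 - 1)).filter (fun l => 2*(γ-1)*j ≤ (2*l+1)*n)).card : ℝ))
        * Real.cos (j*x))
    = (∑ j ∈ Finset.range n,
        ((((Finset.range ((γ+1)/2)).filter (fun l => 2*(γ+1)*j ≤ (2*l+1)*n)).card : ℝ))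
        * Real.cos (j*x))
      - (∑ j ∈ Finset.range n,
        ((((Finset.range ((γ+1)/2 - 1)).filter (fun l => 2*(γ-1)*j ≤ (2*l+1)*n)).card : ℝ))
        * Real.cos (j*x)) by
      rw [← Finset.sum_sub_distrib]
      apply Finset.sum_congr rfl
      intros; ring]
  have hcast : (((γ+1)/2 - 1 : ℕ) : ℝ) = (((γ+1)/2 : ℕ) : ℝ) - 1 := by
    push_cast [Nat.cast_sub (by omega : 1 ≤ (γ+1)/2)]
    ring
  rw [hcast]
  ring

lemma fval_reflect (n γ k : ℕ) (hn : 0 < n) (hk : k ≤ n) :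
    fval n γ (n-k) = fval n γ k := by
  have hnR : ((n:ℝ)) ≠ 0 := Nat.cast_ne_zero.mpr hn.ne'
  have hc : ((n-k:ℕ):ℝ) = (n:ℝ) - k := by
    push_cast [Nat.cast_sub hk]; ring
  unfold fval
  rw [hc]
  congr 1
  · rw [show 2*π*((n:ℝ)-k)/n = (1:ℕ)*(2*π) - 2*π*k/n by push_cast; field_simp]
    rw [Real.cos_nat_mul_two_pi_sub]
  · rw [show 2*π*(γ:ℝ)*((n:ℝ)-k)/n = (γ:ℕ)*(2*π) - 2*π*γ*k/n by push_cast; field_simp]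
    rw [Real.cos_nat_mul_two_pi_sub]

lemma cntP_zero (n γ : ℕ) : cntP n γ 0 = (γ+1)/2 := by
  unfold cntP
  rw [Finset.filter_true_of_mem (fun l _ => by simp)]
  exact Finset.card_range _

lemma cntM_zero (n γ : ℕ) : cntM n γ 0 = (γ+1)/2 - 1 := by
  unfold cntM
  rw [Finset.filter_true_of_mem (fun l _ => by simp)]
  exact Finset.card_range _

lemma fval_zero (n γ : ℕ) (hn : 0 < n) : fval n γ 0 = 2 := by
  unfold fval
  norm_num

lemma sum_fval_zero (n γ : ℕ) (hγ : 3 ≤ γ) (hn : 2*(γ+1) ≤ n) :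
    ∑ k ∈ Finset.range n, fval n γ k = 0 := by
  have h1 := sum_cos_eq_zero n 1 le_rfl (by omega)
  have h2 := sum_cos_eq_zero n γ (by omega) (by omega)
  have key : ∑ k ∈ Finset.range n, fval n γ k
      = (∑ k ∈ Finset.range n, Real.cos (k * (2*π*(1:ℕ)/n)))
        + (∑ k ∈ Finset.range n, Real.cos (k * (2*π*(γ:ℕ)/n))) := by
    rw [← Finset.sum_add_distrib]
    apply Finset.sum_congr rfl
    intro k _
    unfold fval
    congr 2
    · push_cast; ring
    · push_cast; ring
  rw [key, h1, h2]; ring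

lemma abs_sum_eq (n γ : ℕ) (hγ : 3 ≤ γ) (hn : 2*(γ+1) ≤ n) :
    ∑ k ∈ Finset.range n, |fval n γ k|
      = 4 * (∑ j ∈ Finset.range n, ((cntP n γ j : ℝ) - cntM n γ j) * fval n γ j) - 4 := by
  have hn0 : 0 < n := by omega
  set W : ℕ → ℝ := fun j => ((cntP n γ j : ℝ) - cntM n γ j) with hW
  -- reflection identity on Ico 1 n
  have hrefl : ∑ k ∈ Finset.Ico 1 n, W (n-k) * fval n γ k
      = ∑ k ∈ Finset.Ico 1 n, W k * fval n γ k := by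
    apply Finset.sum_nbij' (fun k => n - k) (fun k => n - k)
    · intro a ha; simp only [Finset.mem_Ico] at *; omega
    · intro a ha; simp only [Finset.mem_Ico] at *; omega
    · intro a ha; simp only [Finset.mem_Ico] at ha; omega
    · intro a ha; simp only [Finset.mem_Ico] at ha; omega
    · intro a ha
      simp only [Finset.mem_Ico] at ha
      rw [fval_reflect n γ a hn0 (by omega)]
  -- termwise sum on Ico 1 n
  have hterm : ∑ k ∈ Finset.Ico 1 n, (fval n γ k + |fval n γ k|)
      = 2*(∑ k ∈ Finset.Ico 1 n, W k * fval n γ k)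
        + 2*(∑ k ∈ Finset.Ico 1 n, W (n-k) * fval n γ k) := by
    rw [Finset.mul_sum, Finset.mul_sum, ← Finset.sum_add_distrib]
    apply Finset.sum_congr rfl
    intro k hk
    simp only [Finset.mem_Ico] at hk
    rw [termwise n γ k hγ hn hk.1 hk.2]
    simp only [hW]
    ring
  -- split range n = {0} ∪ Ico 1 n
  have hsplit : ∀ g : ℕ → ℝ, ∑ k ∈ Finset.range n, g k = g 0 + ∑ k ∈ Finset.Ico 1 n, g k := by
    intro g
    rw [Finset.range_eq_Ico, Finset.sum_eq_sum_Ico_succ_bot hn0]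
  have hB := sum_fval_zero n γ hγ hn
  have hB' : ∑ k ∈ Finset.Ico 1 n, fval n γ k = -2 := by
    have := hsplit (fval n γ)
    rw [hB, fval_zero n γ hn0] at this
    linarith
  have habs : ∑ k ∈ Finset.range n, |fval n γ k|
      = 2 + ∑ k ∈ Finset.Ico 1 n, (fval n γ k + |fval n γ k|)
        - ∑ k ∈ Finset.Ico 1 n, fval n γ k := by
    rw [hsplit (fun k => |fval n γ k|), Finset.sum_add_distrib]
    simp only [fval_zero n γ hn0]
    rw [show |(2:ℝ)| = 2 by norm_num]
    ring
  rw [hrefl] at hterm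
  have hT : ∑ j ∈ Finset.range n, W j * fval n γ j
      = 2 + ∑ k ∈ Finset.Ico 1 n, W k * fval n γ k := by
    rw [hsplit (fun j => W j * fval n γ j)]
    have hW0 : W 0 = 1 := by
      simp only [hW, cntP_zero, cntM_zero]
      push_cast [Nat.cast_sub (by omega : 1 ≤ (γ+1)/2)]
      ring
    rw [hW0, fval_zero n γ hn0]
    ring
  rw [hT]
  linarith [habs, hterm, hB']

/-- For integers `γ ≥ 3` and `n ≥ 2(γ+1)`,
`2 ∑_{k=0}^{n-1} |cos(2πk/n) + cos(2πγk/n)|` equals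
`4 ∑_{m∈{1,γ}} (∑_{l=0}^{⌈γ/2⌉-1} D_{⌊(2l+1)n/(2(γ+1))⌋}(2πm/n)
  - ∑_{l=0}^{⌈γ/2⌉-2} D_{⌊(2l+1)n/(2(γ-1))⌋}(2πm/n))`.
Here `⌈γ/2⌉ = (γ+1)/2` and the floors `⌊·⌋` are given by natural number division. -/
theorem sum_abs_cos_eq_dirichlet_general (n γ : ℕ) (hγ : 3 ≤ γ) (hn : 2 * (γ + 1) ≤ n) :
    2 * ∑ k ∈ Finset.range n,
        |Real.cos (2 * π * k / n) + Real.cos (2 * π * γ * k / n)| =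
      4 * ∑ m ∈ ({1, γ} : Finset ℕ),
        ((∑ l ∈ Finset.range ((γ + 1) / 2),
            DKern ((2 * l + 1) * n / (2 * (γ + 1))) (2 * π * m / n)) -
         (∑ l ∈ Finset.range ((γ + 1) / 2 - 1),
            DKern ((2 * l + 1) * n / (2 * (γ - 1))) (2 * π * m / n))) := by
  have hn0 : 0 < n := by omega
  have hγn : γ < n := by omega
  have hs : ∀ m : ℕ, 1 ≤ m → m < n → Real.sin ((2*π*(m:ℝ)/n)/2) ≠ 0 := by
    intro m h1 h2
    rw [show (2*π*(m:ℝ)/n)/2 = π*m/n by ring]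
    exact (sin_pi_mul_pos n m h1 h2).ne'
  rw [Finset.sum_pair (show (1:ℕ) ≠ γ by omega)]
  rw [dsum_eq n γ hγ hn _ (hs 1 le_rfl (by omega)),
      dsum_eq n γ hγ hn _ (hs γ (by omega) hγn)]
  have hLHS : (∑ k ∈ Finset.range n, |Real.cos (2*π*(k:ℝ)/n) + Real.cos (2*π*(γ:ℝ)*k/n)|)
      = ∑ k ∈ Finset.range n, |fval n γ k| := rfl
  rw [hLHS, abs_sum_eq n γ hγ hn]
  have hT : (∑ j ∈ Finset.range n, ((cntP n γ j : ℝ) - cntM n γ j) * Real.cos (j * (2*π*((1:ℕ):ℝ)/n)))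
      + (∑ j ∈ Finset.range n, ((cntP n γ j : ℝ) - cntM n γ j) * Real.cos (j * (2*π*((γ:ℕ):ℝ)/n)))
      = ∑ j ∈ Finset.range n, ((cntP n γ j : ℝ) - cntM n γ j) * fval n γ j := by
    rw [← Finset.sum_add_distrib]
    apply Finset.sum_congr rfl
    intro j _
    unfold fval
    rw [show ((j:ℝ) * (2*π*((1:ℕ):ℝ)/n)) = 2*π*(j:ℝ)/n by push_cast; ring,
        show ((j:ℝ) * (2*π*((γ:ℕ):ℝ)/n)) = 2*π*(γ:ℝ)*j/n by push_cast; ring]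
    ring
  linarith [hT]
end
end

section
/- Let γ ≥ 4 be an even integer. The set of solutions of the equation cos x + cos(γx) = 0 with x ∈ [0, π] is exactly { (2l+1)π/(γ+1) : l ∈ ℤ, 0 ≤ l ≤ γ/2 − 1 } ∪ { (2l+1)π/(γ−1) : l ∈ ℤ, 0 ≤ l ≤ γ/2 − 2 } ∪ { π }. -/
open Real

/-- For an even integer `γ ≥ 4`, the solutions of `cos x + cos(γx) = 0` in `[0, π]` are
exactly `(2l+1)π/(γ+1)` for `0 ≤ l ≤ γ/2 - 1`, `(2l+1)π/(γ-1)` for `0 ≤ l ≤ γ/2 - 2`,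
together with `π`. -/
theorem solutions_cos_add_cos_even (γ : ℤ) (hγ : 4 ≤ γ) (heven : Even γ) :
    {x : ℝ | x ∈ Set.Icc 0 π ∧ Real.cos x + Real.cos (γ * x) = 0} =
      {x : ℝ | ∃ l : ℤ, 0 ≤ l ∧ l ≤ γ / 2 - 1 ∧
          x = (2 * l + 1) * π / ((γ : ℝ) + 1)} ∪
      {x : ℝ | ∃ l : ℤ, 0 ≤ l ∧ l ≤ γ / 2 - 2 ∧
          x = (2 * l + 1) * π / ((γ : ℝ) - 1)} ∪
      ({π} : Set ℝ) := by
  obtain ⟨m, hm⟩ := heven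
  have hγR : (4:ℝ) ≤ (γ:ℝ) := by exact_mod_cast hγ
  have hp1 : (0:ℝ) < (γ:ℝ) + 1 := by linarith
  have hm1 : (0:ℝ) < (γ:ℝ) - 1 := by linarith
  have hp1' : ((γ:ℝ) + 1) ≠ 0 := ne_of_gt hp1
  have hm1' : ((γ:ℝ) - 1) ≠ 0 := ne_of_gt hm1
  have hπ := Real.pi_pos
  have hmγ : γ / 2 = m := by omega
  ext x
  simp only [Set.mem_setOf_eq, Set.mem_union, Set.mem_Icc, Set.mem_singleton_iff]
  constructor
  · rintro ⟨⟨hx0, hxπ⟩, heq⟩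
    rw [Real.cos_add_cos] at heq
    rcases mul_eq_zero.1 heq with h | h
    · rcases mul_eq_zero.1 h with h | h
      · norm_num at h
      · -- cos ((x + γx)/2) = 0
        obtain ⟨n, hn⟩ := Real.cos_eq_zero_iff.1 h
        have hx : x = (2 * n + 1) * π / ((γ:ℝ) + 1) := by
          field_simp at hn ⊢
          linarith [hn]
        have hn0 : 0 ≤ n := by
          by_contra hneg
          push_neg at hneg
          have : (2 * (n:ℝ) + 1) ≤ -1 := by
            have : (n:ℝ) ≤ -1 := by exact_mod_cast (by omega : n ≤ -1)
            linarith
          have hxneg : x < 0 := by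
            rw [hx]
            apply div_neg_of_neg_of_pos _ hp1
            nlinarith
          linarith
        have hnub : n ≤ m := by
          have h1 : (2 * (n:ℝ) + 1) * π ≤ ((γ:ℝ) + 1) * π := by
            have := hxπ
            rw [hx, div_le_iff₀ hp1] at this
            linarith
          have h2 : (2 * (n:ℝ) + 1) ≤ (γ:ℝ) + 1 := le_of_mul_le_mul_right h1 hπ
          have : (2 * n + 1 : ℤ) ≤ γ + 1 := by exact_mod_cast h2
          omega
        rcases eq_or_lt_of_le hnub with heqn | hlt
        · right
          rw [hx, heqn]
          have : (2 * (m:ℝ) + 1) = (γ:ℝ) + 1 := by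
            have : (2 * m + 1 : ℤ) = γ + 1 := by omega
            exact_mod_cast this
          rw [this]
          field_simp
        · left; left
          exact ⟨n, hn0, by omega, hx⟩
    · -- cos ((x - γx)/2) = 0
      obtain ⟨n, hn⟩ := Real.cos_eq_zero_iff.1 h
      -- x (1 - γ) = (2n+1) π
      have hx : x = -(2 * n + 1) * π / ((γ:ℝ) - 1) := by
        field_simp at hn ⊢
        nlinarith [hn]
      have hn0 : n ≤ -1 := by
        by_contra hneg
        push_neg at hneg
        have hge : (0:ℝ) ≤ (n:ℝ) := by exact_mod_cast (by omega : (0:ℤ) ≤ n)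
        have hxneg : x < 0 := by
          rw [hx]
          apply div_neg_of_neg_of_pos _ hm1
          nlinarith
        linarith
      have hnlb : -m ≤ n := by
        have h1 : -(2 * (n:ℝ) + 1) * π ≤ ((γ:ℝ) - 1) * π := by
          have := hxπ
          rw [hx, div_le_iff₀ hm1] at this
          linarith
        have h2 : -(2 * (n:ℝ) + 1) ≤ (γ:ℝ) - 1 := le_of_mul_le_mul_right h1 hπ
        have : -(2 * n + 1 : ℤ) ≤ γ - 1 := by exact_mod_cast h2
        omega
      set l : ℤ := -n - 1 with hl
      have hxl : x = (2 * l + 1) * π / ((γ:ℝ) - 1) := by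
        rw [hx]
        congr 1
        push_cast [hl]
        ring
      rcases eq_or_lt_of_le hnlb with heqn | hlt
      · right
        rw [hxl]
        have hlm : l = m - 1 := by omega
        have : (2 * (l:ℝ) + 1) = (γ:ℝ) - 1 := by
          have : (2 * l + 1 : ℤ) = γ - 1 := by omega
          exact_mod_cast this
        rw [this]
        field_simp
      · left; right
        exact ⟨l, by omega, by omega, hxl⟩
  · rintro ((⟨l, hl0, hl1, hx⟩ | ⟨l, hl0, hl1, hx⟩) | hx)
    · have hlR0 : (0:ℝ) ≤ (l:ℝ) := by exact_mod_cast hl0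
      have hlub : (2 * (l:ℝ) + 1) ≤ (γ:ℝ) - 1 := by
        have : (2 * l + 1 : ℤ) ≤ γ - 1 := by omega
        exact_mod_cast this
      refine ⟨⟨by rw [hx]; positivity, ?_⟩, ?_⟩
      · rw [hx, div_le_iff₀ hp1]
        nlinarith
      · have hgx : (γ:ℝ) * x = (π - x) + l * (2 * π) := by
          rw [hx]; field_simp; ring
        rw [hgx, Real.cos_add_int_mul_two_pi, Real.cos_pi_sub]
        ring
    · have hlR0 : (0:ℝ) ≤ (l:ℝ) := by exact_mod_cast hl0
      have hlub : (2 * (l:ℝ) + 1) ≤ (γ:ℝ) - 3 := by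
        have : (2 * l + 1 : ℤ) ≤ γ - 3 := by omega
        exact_mod_cast this
      refine ⟨⟨by rw [hx]; positivity, ?_⟩, ?_⟩
      · rw [hx, div_le_iff₀ hm1]
        nlinarith
      · have hgx : (γ:ℝ) * x = (x + π) + l * (2 * π) := by
          rw [hx]; field_simp; ring
        rw [hgx, Real.cos_add_int_mul_two_pi, Real.cos_add_pi]
        ring
    · subst hx
      refine ⟨⟨le_of_lt hπ, le_refl _⟩, ?_⟩
      have : (γ:ℝ) * π = (m:ℤ) * (2 * π) := by
        have : (γ:ℝ) = 2 * (m:ℝ) := by exact_mod_cast (by omega : γ = 2 * m)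
        rw [this]; push_cast; ring
      rw [this, Real.cos_int_mul_two_pi, Real.cos_pi]
      ring
end

section
/- For every integer n ≥ 3, (n − 3) + ∑_{k=1}^{n−1} |1 + 2·cos(2πk/n)| = 2·(n − 3 − (⌊2n/3⌋ − ⌊n/3⌋)) + 2·( sin((⌊n/3⌋ + 1/2)·2π/n) − sin((⌊2n/3⌋ + 1/2)·2π/n) ) / sin(π/n), where ⌊·⌋ is the floor function. -/
open Real Finset

private lemma tel_aux (g : ℕ → ℝ) (a : ℕ) : ∀ b, a ≤ b →
    ∑ k ∈ Finset.Ioc a b, (g (k+1) - g k) = g (b+1) - g (a+1) := by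
  intro b hb
  induction b, hb using Nat.le_induction with
  | base => simp
  | succ b hb ih =>
      rw [Finset.sum_Ioc_succ_top (by omega), ih]
      ring

private lemma cos_le_neg_half {x : ℝ} (h1 : 2*π/3 ≤ x) (h2 : x ≤ 4*π/3) :
    Real.cos x ≤ -(1/2) := by
  have h3 : Real.cos (x - π) = -Real.cos x := by
    rw [Real.cos_sub]; simp
  have h4 : |x - π| ≤ π/3 := by
    rw [abs_le]; constructor <;> nlinarith [Real.pi_pos]
  have h5 : Real.cos (π/3) ≤ Real.cos |x - π| :=
    Real.cos_le_cos_of_nonneg_of_le_pi (abs_nonneg _) (by nlinarith [Real.pi_pos]) h4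
  rw [Real.cos_abs, Real.cos_pi_div_three, h3] at h5
  linarith

private lemma neg_half_le_cos {x : ℝ} (h1 : 0 ≤ x) (h2 : x ≤ 2*π/3) :
    -(1/2) ≤ Real.cos x := by
  have h5 : Real.cos (2*π/3) ≤ Real.cos x :=
    Real.cos_le_cos_of_nonneg_of_le_pi h1 (by nlinarith [Real.pi_pos]) h2
  have hc : Real.cos (2*π/3) = -(1/2) := by
    have h : (2*π/3) = π - π/3 := by ring
    rw [h, Real.cos_pi_sub, Real.cos_pi_div_three]
  linarith

/-- For every integer `n ≥ 3`,
`(n-3) + ∑_{k=1}^{n-1} |1 + 2cos(2πk/n)|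
  = 2(n - 3 - (⌊2n/3⌋ - ⌊n/3⌋)) + 2(sin((⌊n/3⌋+1/2)·2π/n) - sin((⌊2n/3⌋+1/2)·2π/n))/sin(π/n)`.
The floors are given by natural number division. -/
theorem energy_formula_Kn_minus_H (n : ℕ) (hn : 3 ≤ n) :
    ((n : ℝ) - 3) + ∑ k ∈ Finset.Icc 1 (n - 1), |1 + 2 * Real.cos (2 * π * k / n)| =
      2 * ((n : ℝ) - 3 - (((2 * n / 3 : ℕ) : ℝ) - ((n / 3 : ℕ) : ℝ))) +
        2 * (Real.sin ((((n / 3 : ℕ) : ℝ) + 1 / 2) * (2 * π / n)) -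
             Real.sin ((((2 * n / 3 : ℕ) : ℝ) + 1 / 2) * (2 * π / n))) / Real.sin (π / n) := by
  set a : ℕ := n / 3 with ha
  set b : ℕ := 2 * n / 3 with hb
  have hn0 : (0:ℝ) < n := by positivity
  have hnne : (n:ℝ) ≠ 0 := ne_of_gt hn0
  -- nat facts
  have h3a : 3 * a ≤ n := by omega
  have h3a' : n < 3 * (a + 1) := by omega
  have h3b : 3 * b ≤ 2 * n := by omega
  have h3b' : 2 * n < 3 * (b + 1) := by omega
  have ha1 : 1 ≤ a := by omega
  have hab : a ≤ b := by omega
  have hbn : b ≤ n - 1 := by omega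
  -- sin (π/n) > 0
  have hs : 0 < Real.sin (π / n) := by
    apply Real.sin_pos_of_pos_of_lt_pi
    · positivity
    · rw [div_lt_iff₀ hn0]
      have h1n : (1:ℝ) < n := by exact_mod_cast (by omega : 1 < n)
      nlinarith [Real.pi_pos]
  have hsne : Real.sin (π / n) ≠ 0 := ne_of_gt hs
  set G : ℕ → ℝ := fun k => Real.sin (((k:ℝ) - 1/2) * (2*π/n)) with hG
  have hterm : ∀ k : ℕ, G (k+1) - G k = 2 * Real.cos (2*π*k/n) * Real.sin (π/n) := by
    intro k
    simp only [hG]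
    push_cast
    have e1 : ((((k:ℝ)+1) - 1/2) * (2*π/n) - ((k:ℝ) - 1/2) * (2*π/n)) / 2 = π/n := by ring
    have e2 : ((((k:ℝ)+1) - 1/2) * (2*π/n) + ((k:ℝ) - 1/2) * (2*π/n)) / 2 = 2*π*k/n := by ring
    rw [Real.sin_sub_sin, e1, e2]
    ring
  have key : ∀ u v : ℕ, u ≤ v →
      ∑ k ∈ Finset.Ioc u v, (2 * Real.cos (2*π*k/n)) = (G (v+1) - G (u+1)) / Real.sin (π/n) := by
    intro u v huv
    rw [eq_div_iff hsne, Finset.sum_mul, ← tel_aux G u v huv]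
    apply Finset.sum_congr rfl
    intro k _
    rw [hterm k]
  have sumf : ∀ u v : ℕ, u ≤ v →
      ∑ k ∈ Finset.Ioc u v, (1 + 2 * Real.cos (2*π*k/n)) =
        ((v:ℝ) - u) + (G (v+1) - G (u+1)) / Real.sin (π/n) := by
    intro u v huv
    rw [Finset.sum_add_distrib, key u v huv, Finset.sum_const, Nat.card_Ioc,
      nsmul_eq_mul, Nat.cast_sub huv]
    ring
  -- sign analysis
  have habs : ∀ k ∈ Finset.Ioc 0 (n-1), |1 + 2 * Real.cos (2*π*k/n)| =
      (if k ∈ Finset.Ioc a b then -(1 + 2 * Real.cos (2*π*k/n)) else 1 + 2 * Real.cos (2*π*k/n)) := by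
    intro k hk
    simp only [Finset.mem_Ioc] at hk ⊢
    by_cases hcase : a + 1 ≤ k ∧ k ≤ b
    · rw [if_pos (by omega)]
      apply abs_of_nonpos
      have hx1 : 2*π/3 ≤ 2*π*k/n := by
        rw [div_le_div_iff₀ (by norm_num) hn0]
        have : (n:ℝ) ≤ 3*k := by exact_mod_cast (by omega : n ≤ 3*k)
        nlinarith [Real.pi_pos]
      have hx2 : 2*π*k/n ≤ 4*π/3 := by
        rw [div_le_div_iff₀ hn0 (by norm_num)]
        have : (3:ℝ)*k ≤ 2*n := by exact_mod_cast (by omega : 3*k ≤ 2*n)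
        nlinarith [Real.pi_pos]
      have := cos_le_neg_half hx1 hx2
      linarith
    · rw [if_neg (by omega)]
      apply abs_of_nonneg
      rcases (by omega : k ≤ a ∨ b + 1 ≤ k) with hk2 | hk2
      · have hx1 : (0:ℝ) ≤ 2*π*k/n := by positivity
        have hx2 : 2*π*k/n ≤ 2*π/3 := by
          rw [div_le_div_iff₀ hn0 (by norm_num)]
          have : (3:ℝ)*k ≤ n := by exact_mod_cast (by omega : 3*k ≤ n)
          nlinarith [Real.pi_pos]
        have := neg_half_le_cos hx1 hx2
        linarith
      · have hc : Real.cos (2*π*k/n) = Real.cos (2*π - 2*π*k/n) := by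
          rw [Real.cos_sub, Real.cos_two_pi, Real.sin_two_pi]; ring
        have hx1 : (0:ℝ) ≤ 2*π - 2*π*k/n := by
          rw [sub_nonneg, div_le_iff₀ hn0]
          have : (k:ℝ) ≤ n := by exact_mod_cast (by omega : k ≤ n)
          nlinarith [Real.pi_pos]
        have hx2 : 2*π - 2*π*k/n ≤ 2*π/3 := by
          rw [sub_le_iff_le_add, div_add_div _ _ (by norm_num : (3:ℝ) ≠ 0) hnne]
          rw [le_div_iff₀ (by positivity)]
          have : (2:ℝ)*n ≤ 3*k := by exact_mod_cast (by omega : 2*n ≤ 3*k)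
          nlinarith [Real.pi_pos]
        have := neg_half_le_cos hx1 hx2
        rw [hc]
        linarith
  -- split the sum
  have hIcc : Finset.Icc 1 (n-1) = Finset.Ioc 0 (n-1) := by
    ext k; simp [Nat.lt_iff_add_one_le]
  have hsplit : ∑ k ∈ Finset.Ioc 0 (n-1), |1 + 2 * Real.cos (2*π*k/n)| =
      (∑ k ∈ Finset.Ioc 0 (n-1), (1 + 2 * Real.cos (2*π*k/n)))
        - 2 * ∑ k ∈ Finset.Ioc a b, (1 + 2 * Real.cos (2*π*k/n)) := by
    rw [Finset.sum_congr rfl habs]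
    rw [Finset.sum_ite]
    have hsub : Finset.Ioc a b ⊆ Finset.Ioc 0 (n-1) := by
      intro k hk
      simp only [Finset.mem_Ioc] at hk ⊢
      omega
    have hfil : Finset.filter (fun k => k ∈ Finset.Ioc a b) (Finset.Ioc 0 (n-1)) = Finset.Ioc a b := by
      ext k
      simp only [Finset.mem_filter, Finset.mem_Ioc]
      omega
    have hfil2 : Finset.filter (fun k => k ∉ Finset.Ioc a b) (Finset.Ioc 0 (n-1)) =
        Finset.Ioc 0 (n-1) \ Finset.Ioc a b := by
      ext k
      simp [Finset.mem_filter, Finset.mem_sdiff]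
    rw [hfil, hfil2, Finset.sum_sdiff_eq_sub hsub, Finset.sum_neg_distrib]
    ring
  -- total sum
  have h0n : (0:ℕ) ≤ n - 1 := by omega
  have htot := sumf 0 (n-1) h0n
  have hGn : G (n - 1 + 1) = -Real.sin (π/n) := by
    have : n - 1 + 1 = n := by omega
    rw [this]
    simp only [hG]
    have harg : ((n:ℝ) - 1/2) * (2*π/n) = 2*π - π/n := by field_simp
    rw [harg, Real.sin_sub, Real.sin_two_pi, Real.cos_two_pi]
    ring
  have hG1 : G 1 = Real.sin (π/n) := by
    simp only [hG]
    norm_num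
    congr 1
    ring
  have hcast : ((n - 1 : ℕ) : ℝ) = (n:ℝ) - 1 := by
    rw [Nat.cast_sub (by omega)]; norm_num
  rw [hGn, hG1, hcast] at htot
  have htot' : ∑ k ∈ Finset.Ioc 0 (n-1), (1 + 2 * Real.cos (2*π*k/n)) = (n:ℝ) - 3 := by
    rw [htot]
    field_simp
    ring
  -- middle sum
  have hmid := sumf a b hab
  -- G values for a, b
  have hGa : G (a+1) = Real.sin (((a:ℝ) + 1/2) * (2*π/n)) := by
    simp only [hG]; push_cast; ring_nf
  have hGb : G (b+1) = Real.sin (((b:ℝ) + 1/2) * (2*π/n)) := by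
    simp only [hG]; push_cast; ring_nf
  -- assemble
  have harg2 : ∀ k : ℕ, (2 * π * (k:ℝ) / n) = 2*π*k/n := fun k => rfl
  rw [hIcc, hsplit, htot', hmid, hGa, hGb]
  field_simp
  ring
end

section
/- For every integer n ≥ 10, (n − 3) + ∑_{k=1}^{n−1} |1 + 2·cos(2πk/n)| > 2(n − 1); that is, the graph K_n − H is hyperenergetic for all n ≥ 10. -/
open Real Finset

lemma sum_cos_roots (n : ℕ) (hn : 2 ≤ n) :
    ∑ k ∈ Finset.range n, Real.cos (2 * π * k / n) = 0 := by
  have hprim := Complex.isPrimitiveRoot_exp n (by omega)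
  have hz : ∑ k ∈ Finset.range n, Complex.exp (2 * π * Complex.I / n) ^ k = 0 :=
    hprim.geom_sum_eq_zero (by omega)
  have hre := congrArg Complex.re hz
  rw [Complex.re_sum, Complex.zero_re] at hre
  rw [← hre]
  apply Finset.sum_congr rfl
  intro k _
  rw [← Complex.exp_nat_mul]
  have h0 : (n : ℂ) ≠ 0 := by exact_mod_cast (by omega : n ≠ 0)
  have : (k : ℂ) * (2 * π * Complex.I / n) = ((2 * π * k / n : ℝ) : ℂ) * Complex.I := by
    push_cast
    field_simp
  rw [this, Complex.exp_ofReal_mul_I_re]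

lemma aux_even (a p : ℝ) (ha : 10 ≤ a) (hp0 : 0 < p) (hp : p < 3.15) : 8 * p ^ 2 < a ^ 2 := by
  nlinarith

lemma aux_odd (a p : ℝ) (ha : 11 ≤ a) (hp0 : 0 < p) (hp : p < 3.15) : 11 * p ^ 2 < a ^ 2 := by
  nlinarith

lemma key_pt (x : ℝ) : 2 - 2 * x ^ 2 ≤ -2 * (1 + 2 * Real.cos (x + π)) := by
  have h1 : 1 - x ^ 2 / 2 ≤ Real.cos x := Real.one_sub_sq_div_two_le_cos
  rw [Real.cos_add_pi]
  linarith

/-- For every integer `n ≥ 10`,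
`(n - 3) + ∑_{k=1}^{n-1} |1 + 2cos(2πk/n)| > 2(n-1)`; that is, the graph `K_n - H`
is hyperenergetic for all `n ≥ 10`. -/
theorem completeMinusHam_hyperenergetic (n : ℕ) (hn : 10 ≤ n) :
    ((n : ℝ) - 3) + ∑ k ∈ Finset.Icc 1 (n - 1), |1 + 2 * Real.cos (2 * π * k / n)| >
      2 * ((n : ℝ) - 1) := by
  have hn2 : 2 ≤ n := by omega
  have hnR : (0:ℝ) < n := by exact_mod_cast (by omega : 0 < n)
  set m := n / 2 with hmdef
  have hm5 : 5 ≤ m := by omega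
  have hmn : m + 1 ≤ n - 1 := by omega
  set f : ℕ → ℝ := fun k => 1 + 2 * Real.cos (2 * π * k / n) with hf
  have hfeq : ∀ k : ℕ, f k = 1 + 2 * Real.cos (2 * π * k / n) := fun k => rfl
  -- sum of f over Icc 1 (n-1)
  have hins : Finset.range n = insert 0 (Finset.Icc 1 (n-1)) := by
    ext k; simp; omega
  have htot : ∑ k ∈ Finset.Icc 1 (n-1), f k = (n:ℝ) - 3 := by
    have h1 : ∑ k ∈ Finset.range n, f k = n := by
      simp only [hfeq]
      rw [Finset.sum_add_distrib, Finset.sum_const, ← Finset.mul_sum, sum_cos_roots n hn2]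
      simp
    rw [hins, Finset.sum_insert (by simp)] at h1
    have h0 : f 0 = 3 := by rw [hfeq]; norm_num
    rw [h0] at h1
    linarith
  -- the special set
  set S : Finset ℕ := {m - 1, m, m + 1} with hS
  have hsub : S ⊆ Finset.Icc 1 (n-1) := by
    intro k hk
    simp only [hS, Finset.mem_insert, Finset.mem_singleton] at hk
    simp only [Finset.mem_Icc]
    omega
  have hstep1 : ∑ k ∈ S, (|f k| - f k) ≤ ∑ k ∈ Finset.Icc 1 (n-1), (|f k| - f k) :=
    Finset.sum_le_sum_of_subset_of_nonneg hsub (fun k _ _ => by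
      have := le_abs_self (f k); linarith)
  have hstep2 : ∑ k ∈ S, (-2 * f k) ≤ ∑ k ∈ S, (|f k| - f k) :=
    Finset.sum_le_sum (fun k _ => by
      have := neg_abs_le (f k); linarith)
  have hd1 : (m - 1 : ℕ) ≠ m := by omega
  have hd2 : (m - 1 : ℕ) ≠ m + 1 := by omega
  have hd3 : m ≠ m + 1 := by omega
  have hSsum : ∑ k ∈ S, (-2 * f k) = -2 * f (m-1) + -2 * f m + -2 * f (m+1) := by
    rw [hS, Finset.sum_insert (by simp [hd1, hd2]), Finset.sum_insert (by simp [hd3]),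
      Finset.sum_singleton]
    ring
  have hcast1 : ((m - 1 : ℕ) : ℝ) = (m : ℝ) - 1 := by
    rw [Nat.cast_sub (by omega)]; simp
  set x1 : ℝ := 2 * π * ((m:ℝ) - 1) / n - π with hx1
  set x2 : ℝ := 2 * π * (m:ℝ) / n - π with hx2
  set x3 : ℝ := 2 * π * ((m:ℝ) + 1) / n - π with hx3
  have hb1 : 2 - 2 * x1 ^ 2 ≤ -2 * f (m-1) := by
    rw [hfeq, hcast1]
    have h : 2 * π * ((m:ℝ) - 1) / n = x1 + π := by rw [hx1]; ring
    rw [h]; exact key_pt x1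
  have hb2 : 2 - 2 * x2 ^ 2 ≤ -2 * f m := by
    rw [hfeq]
    have h : 2 * π * (m:ℝ) / n = x2 + π := by rw [hx2]; ring
    rw [h]; exact key_pt x2
  have hb3 : 2 - 2 * x3 ^ 2 ≤ -2 * f (m+1) := by
    rw [hfeq]
    have h : 2 * π * ((m:ℕ) + 1 : ℕ) / n = x3 + π := by
      push_cast; rw [hx3]; ring
    rw [h]; exact key_pt x3
  have hπ : π < 3.15 := by
    calc π < 3.1416 := Real.pi_lt_d6.trans (by norm_num)
    _ < 3.15 := by norm_num
  have hπ0 : 0 < π := Real.pi_pos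
  have hne : (n:ℝ) ≠ 0 := ne_of_gt hnR
  have hsq : x1 ^ 2 + x2 ^ 2 + x3 ^ 2 < 1 := by
    rcases Nat.even_or_odd n with he | ho
    · obtain ⟨t, ht⟩ := he
      have hnat : n = 2 * m := by omega
      have hnm : (n : ℝ) = 2 * (m:ℝ) := by exact_mod_cast hnat
      have hn10 : (10:ℝ) ≤ n := by exact_mod_cast hn
      have e1 : x1 = -(2 * π) / n := by rw [hx1, hnm]; field_simp; ring
      have e2 : x2 = 0 := by rw [hx2, hnm]; field_simp; ring
      have e3 : x3 = 2 * π / n := by rw [hx3, hnm]; field_simp; ring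
      have heq : x1 ^ 2 + x2 ^ 2 + x3 ^ 2 = 8 * π ^ 2 / (n:ℝ) ^ 2 := by
        rw [e1, e2, e3]; field_simp; ring
      rw [heq, div_lt_one (by positivity)]
      exact aux_even _ _ hn10 hπ0 hπ
    · obtain ⟨t, ht⟩ := ho
      have hnat : n = 2 * m + 1 := by omega
      have hn11 : 11 ≤ n := by omega
      have hnm : (n : ℝ) = 2 * (m:ℝ) + 1 := by exact_mod_cast hnat
      have hn11' : (11:ℝ) ≤ n := by exact_mod_cast hn11
      have e1 : x1 = -(3 * π) / n := by rw [hx1, hnm]; field_simp; ring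
      have e2 : x2 = -π / n := by rw [hx2, hnm]; field_simp; ring
      have e3 : x3 = π / n := by rw [hx3, hnm]; field_simp; ring
      have heq : x1 ^ 2 + x2 ^ 2 + x3 ^ 2 = 11 * π ^ 2 / (n:ℝ) ^ 2 := by
        rw [e1, e2, e3]; field_simp; ring
      rw [heq, div_lt_one (by positivity)]
      exact aux_odd _ _ hn11' hπ0 hπ
  have h2 : 4 < ∑ k ∈ S, (-2 * f k) := by
    rw [hSsum]; linarith
  have h1 : ∑ k ∈ Finset.Icc 1 (n-1), |f k|
      = (∑ k ∈ Finset.Icc 1 (n-1), f k) + ∑ k ∈ Finset.Icc 1 (n-1), (|f k| - f k) := by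
    rw [← Finset.sum_add_distrib]
    apply Finset.sum_congr rfl
    intro k _; ring
  have hfinal : (n:ℝ) + 1 < ∑ k ∈ Finset.Icc 1 (n-1), |f k| := by
    rw [h1, htot]; linarith
  have hgoal : ∑ k ∈ Finset.Icc 1 (n-1), |1 + 2 * Real.cos (2 * π * k / n)|
      = ∑ k ∈ Finset.Icc 1 (n-1), |f k| := rfl
  rw [hgoal]
  linarith
end
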